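/- Claim (ξ lies strictly between 0 and 1). Let M ≥ 3 be an integer, μ_m > 0 for 1 ≤ m ≤ M, 0 < p_m < 1 for 1 ≤ m ≤ M−1 (with p_M = 0), v_m = (∏_{i=1}^{m−1} p_i)/μ_m, and assume ∑_{m=1}^M v_m = 1. Then 0 < ξ < 1. -/

import Mathlib

open Finset

noncomputable section

/-- `coxV μ p m` is the mean time `v_m` spent in phase `m` of a Coxian distribution. -/
def coxV (μ p : ℕ → ℝ) (m : ℕ) : ℝ := (∏ i ∈ Finset.Icc 1 (m - 1), p i) / μ m

/-- The constant `a_m = μ_m / (p_1 μ_1 + μ_m)`. -/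
def coxA (μ p : ℕ → ℝ) (m : ℕ) : ℝ := μ m / (p 1 * μ 1 + μ m)

/-- The constant `b_m`. -/
def coxB (M : ℕ) (μ p : ℕ → ℝ) (m : ℕ) : ℝ :=
  (1 - coxA μ p m) * (1 + ∑ r ∈ Finset.Icc (m + 1) M, coxV μ p r / coxV μ p 1)
    - coxA μ p m * coxV μ p m / coxV μ p 1

/-- The constant `ξ = ∑_{m=2}^M b_m ∏_{j=m+1}^M a_j`. -/
def coxXi (M : ℕ) (μ p : ℕ → ℝ) : ℝ :=
  ∑ m ∈ Finset.Icc 2 M, coxB M μ p m * ∏ j ∈ Finset.Icc (m + 1) M, coxA μ p j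

/-- The constant `c_m`. -/
def coxC (M : ℕ) (μ p : ℕ → ℝ) (m : ℕ) : ℝ :=
  5 * (1 - coxA μ p m) * (∑ r ∈ Finset.Icc (m + 1) M, ((r : ℝ) - 1) * coxV μ p r)
    + 5 * coxA μ p m * (∑ r ∈ Finset.Icc 2 (m - 1), μ r * coxV μ p r / μ m)
    + 5 * ((m : ℝ) - 2) * coxA μ p m * coxV μ p m + 5 - coxA μ p m

/-- The constant `C_M = ∑_{m=2}^M c_m ∏_{j=m+1}^M a_j`. -/
def coxCM (M : ℕ) (μ p : ℕ → ℝ) : ℝ :=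
  ∑ m ∈ Finset.Icc 2 M, coxC M μ p m * ∏ j ∈ Finset.Icc (m + 1) M, coxA μ p j

/-- Auxiliary: `1 + ∑ f ≤ ∏ (1 + f)` for nonnegative `f`. -/
lemma aux_one_add_sum_le_prod (s : Finset ℕ) (f : ℕ → ℝ) (hf : ∀ i ∈ s, 0 ≤ f i) :
    1 + ∑ i ∈ s, f i ≤ ∏ i ∈ s, (1 + f i) := by
  induction s using Finset.cons_induction with
  | empty => simp
  | cons a s ha ih =>
    rw [Finset.sum_cons, Finset.prod_cons]
    have h1 : 0 ≤ f a := hf a (mem_cons_self a s)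
    have h2 : ∀ i ∈ s, 0 ≤ f i := fun i hi => hf i (mem_cons.2 (Or.inr hi))
    have h3 := ih h2
    have h4 : 0 ≤ ∑ i ∈ s, f i := Finset.sum_nonneg h2
    nlinarith

/-- Auxiliary: splitting an `Icc` sum at the bottom. -/
lemma aux_sum_Icc_succ_bot {n M : ℕ} (h : n + 1 ≤ M) (f : ℕ → ℝ) :
    ∑ r ∈ Icc (n+1) M, f r = f (n+1) + ∑ r ∈ Icc (n+2) M, f r := by
  rw [show Icc (n+1) M = insert (n+1) (Icc (n+2) M) by
        rw [← Finset.Ioc_insert_left h, ← Finset.Icc_add_one_left_eq_Ioc]; rfl,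
      Finset.sum_insert (by simp)]

/-- **Claim (`ξ` lies strictly between `0` and `1`).** -/
theorem lem_xi_in_unit_interval (M : ℕ) (hM : 3 ≤ M) (μ p : ℕ → ℝ)
    (hμ : ∀ m ∈ Finset.Icc 1 M, 0 < μ m)
    (hp0 : ∀ m ∈ Finset.Icc 1 (M - 1), 0 < p m)
    (hp1 : ∀ m ∈ Finset.Icc 1 (M - 1), p m < 1)
    (hpM : p M = 0)
    (hnorm : ∑ m ∈ Finset.Icc 1 M, coxV μ p m = 1) :
    0 < coxXi M μ p ∧ coxXi M μ p < 1 := by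
  have hμ1 : 0 < μ 1 := hμ 1 (by simp; omega)
  have hp1pos : 0 < p 1 := hp0 1 (by simp; omega)
  have hp1lt : p 1 < 1 := hp1 1 (by simp; omega)
  have hd : 0 < p 1 * μ 1 := mul_pos hp1pos hμ1
  have hv1 : coxV μ p 1 = 1 / μ 1 := by
    simp [coxV]
  have hv1pos : 0 < coxV μ p 1 := by rw [hv1]; positivity
  -- the telescoping identity
  have key : ∀ n, 1 ≤ n → n ≤ M →
      ∑ m ∈ Icc 2 n, coxB M μ p m * ∏ j ∈ Icc (m + 1) n, coxA μ p j
        = (1 + ∑ r ∈ Icc (n + 1) M, coxV μ p r / coxV μ p 1)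
          - (∏ j ∈ Icc 2 n, coxA μ p j)
              * (1 + ∑ r ∈ Icc 2 M, coxV μ p r / coxV μ p 1) := by
    intro n hn
    induction n, hn using Nat.le_induction with
    | base =>
      intro _
      rw [Finset.Icc_eq_empty (by omega : ¬ (2:ℕ) ≤ 1)]
      simp
    | succ n hn ih =>
      intro hnM
      have hn' : n ≤ M := le_trans (Nat.le_succ n) hnM
      rw [Finset.sum_Icc_succ_top (by omega : 2 ≤ n + 1)]
      have hprod : ∀ m ∈ Icc 2 n,
          coxB M μ p m * ∏ j ∈ Icc (m + 1) (n + 1), coxA μ p j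
            = (coxB M μ p m * ∏ j ∈ Icc (m + 1) n, coxA μ p j) * coxA μ p (n + 1) := by
        intro m hm
        have hm2 : m + 1 ≤ n + 1 := by
          have := (Finset.mem_Icc.mp hm).2; omega
        rw [Finset.prod_Icc_succ_top hm2]; ring
      rw [Finset.sum_congr rfl hprod, ← Finset.sum_mul, ih hn',
          Finset.Icc_eq_empty (by omega : ¬ n + 1 + 1 ≤ n + 1), Finset.prod_empty,
          Finset.prod_Icc_succ_top (by omega : 2 ≤ n + 1)]
      rw [coxB, aux_sum_Icc_succ_bot hnM (fun r => coxV μ p r / coxV μ p 1)]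
      ring
  have hkey := key M (by omega) le_rfl
  rw [Finset.Icc_eq_empty (by omega : ¬ M + 1 ≤ M), Finset.sum_empty] at hkey
  -- the normalized tail sum
  have hsum2 : ∑ r ∈ Icc 2 M, coxV μ p r = 1 - coxV μ p 1 := by
    have h := aux_sum_Icc_succ_bot (by omega : 0 + 1 ≤ M) (coxV μ p)
    simp only [Nat.zero_add] at h
    rw [h] at hnorm
    norm_num at hnorm ⊢
    linarith
  have hF1 : (1 : ℝ) + ∑ r ∈ Icc 2 M, coxV μ p r / coxV μ p 1 = μ 1 := by
    rw [← Finset.sum_div, hsum2, hv1]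
    field_simp
    ring
  rw [hF1] at hkey
  have hxi : coxXi M μ p = 1 - (∏ j ∈ Icc 2 M, coxA μ p j) * μ 1 := by
    rw [coxXi, hkey]; ring
  -- positivity facts about a_j
  have hApos : ∀ j ∈ Icc 2 M, 0 < coxA μ p j := by
    intro j hj
    have hj' := Finset.mem_Icc.mp hj
    have hμj : 0 < μ j := hμ j (Finset.mem_Icc.mpr ⟨by omega, hj'.2⟩)
    exact div_pos hμj (by linarith)
  have hPpos : 0 < ∏ j ∈ Icc 2 M, coxA μ p j := Finset.prod_pos hApos
  -- the product–reciprocal identity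
  have hPQ : (∏ j ∈ Icc 2 M, coxA μ p j) * (∏ j ∈ Icc 2 M, (1 + p 1 * μ 1 / μ j)) = 1 := by
    rw [← Finset.prod_mul_distrib]
    apply Finset.prod_eq_one
    intro j hj
    have hj' := Finset.mem_Icc.mp hj
    have hμj : 0 < μ j := hμ j (Finset.mem_Icc.mpr ⟨by omega, hj'.2⟩)
    rw [coxA]
    field_simp
    ring
  -- the key estimate : μ 1 < Q
  have hQge : 1 + ∑ j ∈ Icc 2 M, p 1 * μ 1 / μ j
      ≤ ∏ j ∈ Icc 2 M, (1 + p 1 * μ 1 / μ j) := by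
    apply aux_one_add_sum_le_prod
    intro j hj
    have hj' := Finset.mem_Icc.mp hj
    have hμj : 0 < μ j := hμ j (Finset.mem_Icc.mpr ⟨by omega, hj'.2⟩)
    positivity
  have hterm : ∀ j ∈ Icc 2 M, μ 1 * coxV μ p j ≤ p 1 * μ 1 / μ j := by
    intro j hj
    have hj' := Finset.mem_Icc.mp hj
    have hμj : 0 < μ j := hμ j (Finset.mem_Icc.mpr ⟨by omega, hj'.2⟩)
    have hPle : ∏ i ∈ Icc 1 (j - 1), p i ≤ p 1 := by
      have h1 : 1 ≤ j - 1 := by omega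
      rw [show Icc 1 (j-1) = insert 1 (Icc 2 (j-1)) by
            rw [← Finset.Ioc_insert_left h1, ← Finset.Icc_add_one_left_eq_Ioc]; rfl,
          Finset.prod_insert (by simp)]
      have htail : ∏ i ∈ Icc 2 (j-1), p i ≤ 1 := by
        apply Finset.prod_le_one
        · intro i hi
          have hi' := Finset.mem_Icc.mp hi
          exact le_of_lt (hp0 i (Finset.mem_Icc.mpr ⟨by omega, by omega⟩))
        · intro i hi
          have hi' := Finset.mem_Icc.mp hi
          exact le_of_lt (hp1 i (Finset.mem_Icc.mpr ⟨by omega, by omega⟩))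
      have htail0 : 0 ≤ ∏ i ∈ Icc 2 (j-1), p i := by
        apply Finset.prod_nonneg
        intro i hi
        have hi' := Finset.mem_Icc.mp hi
        exact le_of_lt (hp0 i (Finset.mem_Icc.mpr ⟨by omega, by omega⟩))
      nlinarith
    rw [coxV, ← mul_div_assoc, div_le_div_iff₀ hμj hμj]
    nlinarith [mul_le_mul_of_nonneg_right (mul_le_mul_of_nonneg_left hPle hμ1.le) hμj.le]
  have hterm3 : μ 1 * coxV μ p 3 < p 1 * μ 1 / μ 3 := by
    have hμ3 : 0 < μ 3 := hμ 3 (Finset.mem_Icc.mpr ⟨by omega, hM⟩)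
    have hp2pos : 0 < p 2 := hp0 2 (Finset.mem_Icc.mpr ⟨by omega, by omega⟩)
    have hp2lt : p 2 < 1 := hp1 2 (Finset.mem_Icc.mpr ⟨by omega, by omega⟩)
    have hVP : coxV μ p 3 = p 1 * p 2 / μ 3 := by
      rw [coxV]
      norm_num
      rw [show Icc 1 2 = {1, 2} from rfl]
      rw [Finset.prod_insert (by simp), Finset.prod_singleton]
    rw [hVP, ← mul_div_assoc, div_lt_div_iff₀ hμ3 hμ3]
    have h12 : p 1 * p 2 < p 1 := by nlinarith
    nlinarith [mul_lt_mul_of_pos_right (mul_lt_mul_of_pos_left h12 hμ1) hμ3]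
  have hsumlt : μ 1 - 1 < ∑ j ∈ Icc 2 M, p 1 * μ 1 / μ j := by
    have h1 : ∑ j ∈ Icc 2 M, μ 1 * coxV μ p j = μ 1 - 1 := by
      rw [← Finset.mul_sum, hsum2, hv1]
      field_simp
    rw [← h1]
    apply Finset.sum_lt_sum hterm
    exact ⟨3, Finset.mem_Icc.mpr ⟨by omega, hM⟩, hterm3⟩
  have hQgt : μ 1 < ∏ j ∈ Icc 2 M, (1 + p 1 * μ 1 / μ j) := by
    calc μ 1 < 1 + ∑ j ∈ Icc 2 M, p 1 * μ 1 / μ j := by linarith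
    _ ≤ _ := hQge
  have hQpos : 0 < ∏ j ∈ Icc 2 M, (1 + p 1 * μ 1 / μ j) := lt_trans hμ1 hQgt
  have hPval : (∏ j ∈ Icc 2 M, coxA μ p j) = 1 / ∏ j ∈ Icc 2 M, (1 + p 1 * μ 1 / μ j) := by
    field_simp
    linarith [hPQ]
  have hlt1 : (∏ j ∈ Icc 2 M, coxA μ p j) * μ 1 < 1 := by
    rw [hPval, div_mul_eq_mul_div, one_mul, div_lt_one hQpos]
    exact hQgt
  constructor
  · rw [hxi]; linarith
  · rw [hxi]
    have : 0 < (∏ j ∈ Icc 2 M, coxA μ p j) * μ 1 := mul_pos hPpos hμ1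
    linarith
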